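/- arXiv:1506.04485 — 2 statements merged into one kernel-verified Lean document; each statement's English description precedes it below -/
import Mathlib

section
/- Let h : {0,1}^n → {0,1} with d(h) ≤ r, let G = {g_1, …, g_m} be Boolean functions on {0,1}^{n+1}, and define f_i(x) = g_i(h(x), x) for i = 1, …, m; set F = {f_1, …, f_m}. Then d(F) ≤ 2·d(G) + 2r + 1. -/
open Classical in
/-- Number of jumps (1→0 drops of some member of `F`) between consecutive
elements of a list of Boolean tuples. -/
noncomputable def jumps {k : ℕ} (F : Finset ((Fin k → Bool) → Bool)) :
    List (Fin k → Bool) → ℕ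
  | a :: b :: t =>
      (if ∃ f ∈ F, f a = true ∧ f b = false then 1 else 0) + jumps F (b :: t)
  | _ => 0

/-- Number of value changes of `h` between consecutive elements of a list. -/
def changes {k : ℕ} (h : (Fin k → Bool) → Bool) :
    List (Fin k → Bool) → ℕ
  | a :: b :: t => (if h a ≠ h b then 1 else 0) + changes h (b :: t)
  | _ => 0

/-- An increasing chain of pairwise distinct tuples (coordinatewise order). -/
def IsIncChain {k : ℕ} (l : List (Fin k → Bool)) : Prop :=
  l.Chain' (· ≤ ·) ∧ l.Pairwise (· ≠ ·)

/-- The decrease `d(F)` of a system of Boolean functions: the maximum number of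
jumps over all increasing chains. -/
noncomputable def decrease {k : ℕ} (F : Finset ((Fin k → Bool) → Bool)) : ℕ :=
  sSup {m | ∃ l, IsIncChain l ∧ jumps F l = m}

/-- The decrease `d(f)` of a single Boolean function. -/
noncomputable def decrease1 {k : ℕ} (f : (Fin k → Bool) → Bool) : ℕ :=
  decrease {f}

/-
Lift a chain `α₁ ≤ … ≤ α_s` in `{0,1}^n` to the list of tuples `(h(αⱼ), αⱼ)`. A jump of `F` at
`(αⱼ, αⱼ₊₁)` is a jump of `G` between the lifted tuples. Splitting the lifted list by its first
coordinate gives two increasing chains in `{0,1}^(n+1)`, with at most `d(G)` jumps each. A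
consecutive pair whose two points fall into different parts is a change of `h`. Between two rises
of `h` there is a drop, so `h` changes at most `2 d(h) + 1 ≤ 2r + 1` times.
-/

section Jumps

variable {k : ℕ}

lemma jumps_le_length (F : Finset ((Fin k → Bool) → Bool)) :
    ∀ l : List (Fin k → Bool), jumps F l ≤ l.length
  | a :: b :: t => by
      have := jumps_le_length F (b :: t)
      simp only [jumps, List.length_cons] at *
      split <;> omega
  | [] | [_] => by simp [jumps]

lemma jumps_le_jumps_cons (F : Finset ((Fin k → Bool) → Bool)) (a : Fin k → Bool) :
    ∀ l : List (Fin k → Bool), jumps F l ≤ jumps F (a :: l)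
  | [] => le_rfl
  | _ :: _ => Nat.le_add_left _ _

lemma jumps_le_decrease (F : Finset ((Fin k → Bool) → Bool)) {l : List (Fin k → Bool)}
    (hl : IsIncChain l) : jumps F l ≤ decrease F := by
  refine le_csSup ⟨Fintype.card (Fin k → Bool), ?_⟩ ⟨l, hl, rfl⟩
  rintro _ ⟨l', hl', rfl⟩
  exact (jumps_le_length F l').trans (List.Nodup.length_le_card hl'.2)

lemma jumps_image_comp {m : ℕ} (G : Finset ((Fin m → Bool) → Bool))
    (φ : (Fin k → Bool) → Fin m → Bool) :
    ∀ l : List (Fin k → Bool), jumps (G.image (· ∘ φ)) l = jumps G (l.map φ)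
  | a :: b :: t => by
      simp only [jumps, List.map_cons, Finset.exists_mem_image, Function.comp_apply,
        jumps_image_comp G φ (b :: t)]
  | [] | [_] => rfl

lemma changes_map {m : ℕ} (p : (Fin m → Bool) → Bool) (φ : (Fin k → Bool) → Fin m → Bool) :
    ∀ l : List (Fin k → Bool), changes p (l.map φ) = changes (p ∘ φ) l
  | a :: b :: t => by
      simp only [changes, List.map_cons, Function.comp_apply, ← changes_map p φ (b :: t)]
  | [] | [_] => rfl

/-- Strengthened for the induction: a list starting at a `1` of `h` needs one more drop. -/
lemma changes_add_le_two_mul_jumps_add_one (h : (Fin k → Bool) → Bool) :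
    ∀ (a : Fin k → Bool) (t : List (Fin k → Bool)),
      changes h (a :: t) + (if h a then 1 else 0) ≤ 2 * jumps {h} (a :: t) + 1
  | a, [] => by simp only [changes, jumps]; split <;> omega
  | a, b :: t => by
      have ih := changes_add_le_two_mul_jumps_add_one h b t
      simp only [changes, jumps, Finset.mem_singleton, exists_eq_left]
      cases h a <;> cases hb : h b <;> simp [hb] at ih ⊢ <;> omega

lemma changes_le_two_mul_jumps_add_one (h : (Fin k → Bool) → Bool) :
    ∀ l : List (Fin k → Bool), changes h l ≤ 2 * jumps {h} l + 1
  | [] => by simp [changes]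
  | a :: t => (Nat.le_add_right _ _).trans (changes_add_le_two_mul_jumps_add_one h a t)

/-- Neighbours with equal `p`-values stay neighbours in one of the two parts; every other
neighbouring pair is a change of `p`. -/
lemma jumps_le_jumps_filter_add_jumps_filter_add_changes (F : Finset ((Fin k → Bool) → Bool))
    (p : (Fin k → Bool) → Bool) :
    ∀ l : List (Fin k → Bool),
      jumps F l ≤ jumps F (l.filter p) + jumps F (l.filter (!p ·)) + changes p l
  | a :: b :: t => by
      have ih := jumps_le_jumps_filter_add_jumps_filter_add_changes F p (b :: t)
      have hdrop : (if ∃ f ∈ F, f a = true ∧ f b = false then 1 else 0) ≤ 1 := by split <;> omega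
      have hp := jumps_le_jumps_cons F a ((b :: t).filter p)
      have hnp := jumps_le_jumps_cons F a ((b :: t).filter (!p ·))
      cases ha : p a <;> cases hb : p b <;>
        simp [ha, hb, jumps, changes] at ih hp hnp ⊢ <;> omega
  | [] | [_] => by simp [jumps, changes]

end Jumps

lemma IsIncChain.sublist {k : ℕ} {l l' : List (Fin k → Bool)} (hl : IsIncChain l)
    (hs : l'.Sublist l) : IsIncChain l' :=
  ⟨List.isChain_iff_pairwise.mpr ((List.isChain_iff_pairwise.mp hl.1).sublist hs),
    hl.2.sublist hs⟩

lemma isIncChain_of_map_tail {k : ℕ} {l : List (Fin (k + 1) → Bool)} (c : Bool)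
    (hl : IsIncChain (l.map Fin.tail)) (hc : ∀ x ∈ l, x 0 = c) : IsIncChain l := by
  have hle {x y} (hx : x ∈ l) (hy : y ∈ l) (hxy : Fin.tail x ≤ Fin.tail y) : x ≤ y := by
    rw [← Fin.cons_self_tail x, ← Fin.cons_self_tail y, Fin.cons_le_cons, hc x hx, hc y hy]
    exact ⟨le_rfl, hxy⟩
  refine ⟨List.isChain_iff_pairwise.mpr ?_, ?_⟩
  · exact (List.pairwise_map.mp (List.isChain_iff_pairwise.mp hl.1)).imp_of_mem hle
  · exact (List.pairwise_map.mp hl.2).imp fun hne heq => hne (congrArg Fin.tail heq)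

lemma isIncChain_of_sublist_map_cons {n : ℕ} (h : (Fin n → Bool) → Bool)
    {l : List (Fin n → Bool)} (hl : IsIncChain l) {L : List (Fin (n + 1) → Bool)}
    (hL : L.Sublist (l.map fun x => Fin.cons (h x) x)) (c : Bool) (hc : ∀ y ∈ L, y 0 = c) :
    IsIncChain L := by
  refine isIncChain_of_map_tail c (hl.sublist ?_) hc
  simpa [Function.comp_def] using hL.map Fin.tail

/-- if `d(h) ≤ r` and `F` is obtained from a system `G` on
`{0,1}^{n+1}` by substituting `h(x)` for the first variable, then
`d(F) ≤ 2·d(G) + 2r + 1`. -/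
theorem stmt9 {n : ℕ} (h : (Fin n → Bool) → Bool) (r : ℕ)
    (hr : decrease1 h ≤ r) (G : Finset ((Fin (n + 1) → Bool) → Bool)) :
    decrease (G.image (fun g => fun x : Fin n → Bool => g (Fin.cons (h x) x)))
      ≤ 2 * decrease G + 2 * r + 1 := by
  refine csSup_le' ?_
  rintro _ ⟨l, hl, rfl⟩
  set L := l.map fun x => (Fin.cons (h x) x : Fin (n + 1) → Bool)
  have hL1 : IsIncChain (L.filter (· 0)) :=
    isIncChain_of_sublist_map_cons h hl List.filter_sublist true
      fun y hy => by simpa using List.of_mem_filter hy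
  have hL0 : IsIncChain (L.filter (!· 0)) :=
    isIncChain_of_sublist_map_cons h hl List.filter_sublist false
      fun y hy => by simpa using List.of_mem_filter hy
  have hchanges : changes (· 0) L ≤ 2 * r + 1 := by
    rw [changes_map]
    exact (changes_le_two_mul_jumps_add_one h l).trans
      (by gcongr; exact (jumps_le_decrease {h} hl).trans hr)
  calc jumps _ l = jumps G L := jumps_image_comp G _ l
    _ ≤ jumps G (L.filter (· 0)) + jumps G (L.filter (!· 0)) + changes (· 0) L :=
      jumps_le_jumps_filter_add_jumps_filter_add_changes G _ L
    _ ≤ 2 * decrease G + 2 * r + 1 := by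
      linarith [jumps_le_decrease G hL1, jumps_le_decrease G hL0]
end

section
/- Markov's theorem (lower bound restated combinatorially): any circuit over the basis of all monotone Boolean functions together with negation that computes a system F of Boolean functions must contain at least ⌈log₂(d(F)+1)⌉ negation gates; equivalently, a circuit with k negations can only compute systems F with d(F) ≤ 2^k − 1. -/
/-- A Boolean circuit over the basis consisting of all monotone Boolean
functions (weight 0) together with the non-monotone basis functions from `Ω`
(weight 1).  Gate `i` may read the `n` inputs and all previous gate values. -/
structure Circuit (n : ℕ) (Ω : Set (Σ m : ℕ, (Fin m → Bool) → Bool)) where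
  size : ℕ
  gate : (i : Fin size) → ((Fin (n + i) → Bool) → Bool)
  nonmono : Finset (Fin size)
  mono_ok : ∀ i, i ∉ nonmono → Monotone (gate i)
  basis_ok : ∀ i ∈ nonmono, ∃ ω ∈ Ω, ∃ sel : Fin ω.1 → Fin (n + i),
      gate i = fun v => ω.2 (fun j => v (sel j))

/-- The value carried by wire `j` of the circuit (wires `0,…,n-1` are the
inputs, wire `n+i` is the output of gate `i`). -/
def Circuit.wire {n : ℕ} {Ω : Set (Σ m : ℕ, (Fin m → Bool) → Bool)}
    (C : Circuit n Ω) (x : Fin n → Bool) (j : ℕ) : Bool :=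
  if h : j < n then x ⟨j, h⟩
  else if h2 : j - n < C.size then
    C.gate ⟨j - n, h2⟩ (fun t => C.wire x t.val)
  else false
termination_by j
decreasing_by
  have ht := t.isLt
  simp only [not_lt] at h
  simp at ht
  omega

/-- The circuit `C` computes the system `F` if every member of `F` appears on
some wire of `C`. -/
def Circuit.Computes {n : ℕ} {Ω : Set (Σ m : ℕ, (Fin m → Bool) → Bool)}
    (C : Circuit n Ω) (F : Finset ((Fin n → Bool) → Bool)) : Prop :=
  ∀ f ∈ F, ∃ o : ℕ, o < n + C.size ∧ ∀ x, f x = C.wire x o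

/-- The inversion complexity `I_B(F)`: the minimal number of non-monotone
(weight-1) gates in a circuit over the basis computing the system `F`. -/
noncomputable def invCompl (n : ℕ) (Ω : Set (Σ m : ℕ, (Fin m → Bool) → Bool))
    (F : Finset ((Fin n → Bool) → Bool)) : ℕ :=
  sInf {k | ∃ C : Circuit n Ω, C.Computes F ∧ C.nonmono.card = k}

/-- The basis `{¬}`: negation as the unique weight-1 basis function. -/
def negBasis : Set (Σ m : ℕ, (Fin m → Bool) → Bool) :=
  {⟨1, fun v => !(v 0)⟩}

/-!
Along an increasing chain, the input `h` of the first negation gate is monotone (it is computed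
before any negation), so it switches from `false` to `true` at most once. On each of the two
pieces of the chain the first negation gate is constant; replacing it by that constant gives a
circuit with one negation fewer that computes the same functions on the piece. Hence the number
`J(k)` of jumps possible with `k` negations satisfies `J(k) ≤ 2 J(k-1) + 1` and `J(0) = 0`, so
`J(k) ≤ 2^k - 1`.
-/

section Jumps

variable {k : ℕ} (F : Finset ((Fin k → Bool) → Bool))

theorem jumps_append_le : ∀ l₁ l₂ : List (Fin k → Bool),
    jumps F (l₁ ++ l₂) ≤ jumps F l₁ + jumps F l₂ + 1
  | [], _ => by simp [jumps]
  | [_], [] => by simp [jumps]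
  | [a], b :: t => by
    simp only [List.cons_append, List.nil_append, jumps]
    split <;> omega
  | a :: b :: t, l₂ => by
    have ih := jumps_append_le (b :: t) l₂
    simp only [List.cons_append] at ih ⊢
    simp only [jumps]
    omega

variable {F}

theorem jumps_eq_zero_of_monotoneOn : ∀ {l : List (Fin k → Bool)}, l.IsChain (· ≤ ·) →
    (∀ f ∈ F, MonotoneOn f {x | x ∈ l}) → jumps F l = 0
  | [], _, _ => rfl
  | [_], _, _ => rfl
  | a :: b :: t, hl, hF => by
    obtain ⟨hab, hl⟩ := List.isChain_cons_cons.1 hl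
    have hdrop : ¬ ∃ f ∈ F, f a = true ∧ f b = false := by
      rintro ⟨f, hf, hfa, hfb⟩
      have : f b = true := hF f hf (by simp) (by simp) hab hfa
      simp [hfb] at this
    have htail : ∀ f ∈ F, MonotoneOn f {x | x ∈ b :: t} := fun f hf =>
      (hF f hf).mono fun x hx => List.mem_cons_of_mem a hx
    simp only [jumps, if_neg hdrop, jumps_eq_zero_of_monotoneOn hl htail]

end Jumps

theorem List.exists_append_of_monotone {α : Type*} [Preorder α] {h : α → Bool}
    (hh : Monotone h) :
    ∀ {l : List α}, l.IsChain (· ≤ ·) → ∃ l₁ l₂, l = l₁ ++ l₂ ∧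
      (∀ a ∈ l₁, h a = false) ∧ ∀ a ∈ l₂, h a = true
  | [], _ => ⟨[], [], rfl, by simp, by simp⟩
  | a :: t, hl => by
    cases ha : h a
    · obtain ⟨l₁, l₂, rfl, h₁, h₂⟩ := exists_append_of_monotone hh hl.tail
      refine ⟨a :: l₁, l₂, rfl, ?_, h₂⟩
      rintro b (_ | ⟨_, hb⟩)
      exacts [ha, h₁ b hb]
    · refine ⟨[], a :: t, rfl, by simp, ?_⟩
      have hle := List.isChain_iff_pairwise.1 hl
      rintro b (_ | ⟨_, hb⟩)
      · exact ha
      · exact hh (List.rel_of_pairwise_cons hle hb) ha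

namespace Circuit

variable {n : ℕ} {Ω : Set (Σ m : ℕ, (Fin m → Bool) → Bool)} (C : Circuit n Ω)

theorem wire_of_lt (x : Fin n → Bool) {j : ℕ} (h : j < n) : C.wire x j = x ⟨j, h⟩ := by
  rw [wire, dif_pos h]

theorem wire_add (x : Fin n → Bool) (i : Fin C.size) :
    C.wire x (n + i) = C.gate i fun t => C.wire x t := by
  have hi : n + i - n < C.size := by simp
  rw [wire, dif_neg (by omega), dif_pos hi]
  have e : (⟨n + i - n, hi⟩ : Fin C.size) = i := by ext; simp
  rw [e]

theorem wire_of_size_le (x : Fin n → Bool) {j : ℕ} (h : n + C.size ≤ j) :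
    C.wire x j = false := by
  rw [wire, dif_neg (by omega), dif_neg (by omega)]

theorem wire_cases (j : ℕ) : j < n ∨ (∃ i : Fin C.size, j = n + i) ∨ n + C.size ≤ j := by
  by_cases hj : j < n
  · exact .inl hj
  by_cases hs : j < n + C.size
  · exact .inr (.inl ⟨⟨j - n, by omega⟩, by simp; omega⟩)
  · exact .inr (.inr (by omega))

theorem monotone_wire {j : ℕ} (hj : ∀ i ∈ C.nonmono, j < n + i) :
    Monotone fun x => C.wire x j := by
  induction j using Nat.strong_induction_on with
  | _ j ih =>
  intro x y hxy
  rcases C.wire_cases j with hj' | ⟨i, rfl⟩ | hj'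
  · simpa only [C.wire_of_lt _ hj'] using hxy ⟨j, hj'⟩
  · have hi : i ∉ C.nonmono := fun hi => (hj i hi).false
    simp only [C.wire_add]
    exact C.mono_ok i hi fun t => ih t t.2 (fun i' hi' => t.2.trans (hj i' hi')) hxy
  · simp only [C.wire_of_size_le _ hj', le_refl]

def fixGate (i₀ : Fin C.size) (c : Bool) : Circuit n Ω where
  size := C.size
  gate i := if i = i₀ then fun _ => c else C.gate i
  nonmono := C.nonmono.erase i₀
  mono_ok i hi := by
    by_cases h : i = i₀
    · simpa only [if_pos h] using monotone_const
    · simpa only [if_neg h] using C.mono_ok i fun hin => hi (Finset.mem_erase.2 ⟨h, hin⟩)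
  basis_ok i hi := by
    obtain ⟨h, hin⟩ := Finset.mem_erase.1 hi
    simpa only [if_neg h] using C.basis_ok i hin

theorem card_nonmono_fixGate {i₀ : Fin C.size} (hi₀ : i₀ ∈ C.nonmono) (c : Bool) :
    (C.fixGate i₀ c).nonmono.card = C.nonmono.card - 1 :=
  Finset.card_erase_of_mem hi₀

theorem wire_fixGate {i₀ : Fin C.size} {c : Bool} {x : Fin n → Bool}
    (hx : C.wire x (n + i₀) = c) (j : ℕ) : (C.fixGate i₀ c).wire x j = C.wire x j := by
  induction j using Nat.strong_induction_on with
  | _ j ih =>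
  rcases C.wire_cases j with hj | ⟨i, rfl⟩ | hj
  · rw [wire_of_lt _ _ hj, C.wire_of_lt _ hj]
  · rw [(C.fixGate i₀ c).wire_add x i]
    change (if i = i₀ then fun _ => c else C.gate i) _ = _
    split_ifs with hi
    · rw [hi, hx]
    · rw [C.wire_add]
      exact congrArg _ (funext fun t => ih t (by omega))
  · exact ((C.fixGate i₀ c).wire_of_size_le x hj).trans (C.wire_of_size_le _ hj).symm

def ComputesOn (F : Finset ((Fin n → Bool) → Bool)) (s : Set (Fin n → Bool)) : Prop :=
  ∀ f ∈ F, ∃ o : ℕ, ∀ x ∈ s, f x = C.wire x o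

theorem Computes.computesOn {C : Circuit n Ω} {F : Finset ((Fin n → Bool) → Bool)}
    (hC : C.Computes F) (s : Set (Fin n → Bool)) : C.ComputesOn F s := fun f hf =>
  let ⟨o, _, ho⟩ := hC f hf
  ⟨o, fun x _ => ho x⟩

theorem ComputesOn.mono {C : Circuit n Ω} {F : Finset ((Fin n → Bool) → Bool)}
    {s t : Set (Fin n → Bool)} (hC : C.ComputesOn F t) (hst : s ⊆ t) : C.ComputesOn F s :=
  fun f hf =>
  let ⟨o, ho⟩ := hC f hf
  ⟨o, fun x hx => ho x (hst hx)⟩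

theorem ComputesOn.fixGate {C : Circuit n Ω} {F : Finset ((Fin n → Bool) → Bool)}
    {s : Set (Fin n → Bool)} (hC : C.ComputesOn F s) {i₀ : Fin C.size} {c : Bool}
    (hs : ∀ x ∈ s, C.wire x (n + i₀) = c) : (C.fixGate i₀ c).ComputesOn F s := fun f hf =>
  let ⟨o, ho⟩ := hC f hf
  ⟨o, fun x hx => (ho x hx).trans (C.wire_fixGate (hs x hx) o).symm⟩

end Circuit

theorem Circuit.exists_wire_add_eq_not {n : ℕ} (C : Circuit n negBasis) {i : Fin C.size}
    (hi : i ∈ C.nonmono) : ∃ j < n + i, ∀ x, C.wire x (n + i) = !C.wire x j := by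
  obtain ⟨ω, hω, sel, hg⟩ := C.basis_ok i hi
  obtain rfl : ω = ⟨1, fun v => !(v 0)⟩ := hω
  exact ⟨sel 0, (sel 0).2, fun x => by rw [C.wire_add, hg]⟩

theorem jumps_le_of_computesOn {n : ℕ} {F : Finset ((Fin n → Bool) → Bool)}
    (C : Circuit n negBasis) {l : List (Fin n → Bool)} (hl : l.IsChain (· ≤ ·))
    (hC : C.ComputesOn F {x | x ∈ l}) :
    jumps F l ≤ 2 ^ C.nonmono.card - 1 := by
  induction hk : C.nonmono.card generalizing C l with
  | zero =>
    refine (jumps_eq_zero_of_monotoneOn hl fun f hf => ?_).le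
    obtain ⟨o, ho⟩ := hC f hf
    have hmono := C.monotone_wire (j := o) (by simp [Finset.card_eq_zero.1 hk])
    intro x hx y hy hxy
    simpa only [ho x hx, ho y hy] using hmono hxy
  | succ k ih =>
    have hne : C.nonmono.Nonempty := Finset.card_pos.1 (by omega)
    set i₀ := C.nonmono.min' hne
    have hi₀ : i₀ ∈ C.nonmono := C.nonmono.min'_mem hne
    obtain ⟨j, hj, hneg⟩ := C.exists_wire_add_eq_not hi₀
    have hh : Monotone fun x => C.wire x j :=
      C.monotone_wire fun i hi => hj.trans_le (by simpa using C.nonmono.min'_le i hi)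
    obtain ⟨l₁, l₂, rfl, h₁, h₂⟩ := List.exists_append_of_monotone hh hl
    have bound : ∀ (l' : List (Fin n → Bool)) (c : Bool), l'.Sublist (l₁ ++ l₂) →
        (∀ x ∈ l', C.wire x j = !c) → jumps F l' ≤ 2 ^ k - 1 := fun l' c hsub hc =>
      ih (C.fixGate i₀ c) (hl.sublist hsub)
        ((hC.mono fun x hx => hsub.subset hx).fixGate fun x hx => by
          simp [hneg, hc x hx])
        (by rw [C.card_nonmono_fixGate hi₀, hk]; rfl)
    have := jumps_append_le F l₁ l₂
    have := bound l₁ true (List.sublist_append_left _ _) h₁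
    have := bound l₂ false (List.sublist_append_right _ _) h₂
    have : 1 ≤ 2 ^ k := Nat.one_le_two_pow
    rw [pow_succ]
    omega

theorem decrease_le_of_forall_jumps_le {n : ℕ} {F : Finset ((Fin n → Bool) → Bool)} {B : ℕ}
    (hB : ∀ l, IsIncChain l → jumps F l ≤ B) : decrease F ≤ B :=
  csSup_le ⟨0, [], ⟨List.isChain_nil, List.Pairwise.nil⟩, rfl⟩
    fun _ ⟨l, hl, hm⟩ => hm ▸ hB l hl

theorem Circuit.Computes.decrease_le {n : ℕ} {F : Finset ((Fin n → Bool) → Bool)}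
    {C : Circuit n negBasis} (hC : C.Computes F) : decrease F ≤ 2 ^ C.nonmono.card - 1 :=
  decrease_le_of_forall_jumps_le fun _ hl => jumps_le_of_computesOn C hl.1 (hC.computesOn _)

/-- Markov's theorem, lower bound: any circuit over monotone
functions plus negation computing `F` has at least `⌈log₂(d(F)+1)⌉` negation
gates; equivalently, a circuit with `k` negations only computes systems with
`d(F) ≤ 2^k − 1`. -/
theorem stmt11 (n : ℕ) (F : Finset ((Fin n → Bool) → Bool)) :
    (∀ C : Circuit n negBasis, C.Computes F →
      Nat.clog 2 (decrease F + 1) ≤ C.nonmono.card) ∧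
    (∀ k : ℕ, ∀ C : Circuit n negBasis, C.Computes F → C.nonmono.card = k →
      decrease F ≤ 2 ^ k - 1) := by
  refine ⟨fun C hC => ?_, fun k C hC hk => hk ▸ hC.decrease_le⟩
  have := hC.decrease_le
  have : 1 ≤ 2 ^ C.nonmono.card := Nat.one_le_two_pow
  exact (Nat.clog_le_iff_le_pow one_lt_two).2 (by omega)
end
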